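/- Let R = k[x,y,z]/(x²-y², y²-z²) with char k ≠ 2 and let t = (t₀,t₁) with t₀,t₁ ≠ 0. Let N_t = coker(Φ_t⁺). Then dim_k Hom_{grR}(N_t, k) = 2 and dim_k Hom_{grR}(N_t, L_i) ≥ 1 for each i = 1,2,3,4, where L_i are the point modules; a nonzero element of Hom_{grR}(N_t, L₁) is induced by the chain map (A,B) with A = [[0,1],[-t₀,0]], B = [0,1] from the presentation Φ_t⁺ to the presentation [x-y, y-z] of L₁ = R/(x-y, y-z). -/

import Mathlib

/-!
Every entry of `Φ_t⁺` is a linear form, hence lies in `m`, so every pair of scalars defines a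
morphism `N_t → k`. For each point module `L_i = R/(l_i, l_{i+1})` an explicit chain map `(A, B)`
with scalar entries, `B·Φ_t⁺ = [l_i, l_{i+1}]·A`, gives a nonzero morphism `N_t → L_i`. Being an
identity between linear forms, it already holds in `k[x,y,z]` and only has to be transported to `R`.
-/

open MvPolynomial

noncomputable section

variable (k : Type) [Field k]

def fourPtsIdeal : Ideal (MvPolynomial (Fin 3) k) :=
  Ideal.span {(X 0 : MvPolynomial (Fin 3) k) ^ 2 - X 1 ^ 2,
              (X 1 : MvPolynomial (Fin 3) k) ^ 2 - X 2 ^ 2}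

/-- `R = k[x,y,z]/(x² - y², y² - z²)`. -/
def Rring := MvPolynomial (Fin 3) k ⧸ fourPtsIdeal k

instance : CommRing (Rring k) := Ideal.Quotient.commRing _
instance : Algebra k (Rring k) := Ideal.Quotient.algebra k

/-- `Φ_t⁺ = [[t₁(x+y), y+z], [t₀(z-y), x-y]]` over `R`. -/
def PhiPlusR (t₀ t₁ : k) : Matrix (Fin 2) (Fin 2) (Rring k) :=
  (!![C t₁ * (X 0 + X 1), X 1 + X 2;
      C t₀ * (X 2 - X 1), X 0 - X 1]).map (Ideal.Quotient.mk (fourPtsIdeal k))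

/-- The irrelevant maximal ideal `m = (x, y, z)` of `R` (so `R/m = k`). -/
def irrR : Ideal (Rring k) :=
  Ideal.span {Ideal.Quotient.mk (fourPtsIdeal k) (X 0),
              Ideal.Quotient.mk (fourPtsIdeal k) (X 1),
              Ideal.Quotient.mk (fourPtsIdeal k) (X 2)}

/-- The linear forms `(l₁, l₂, l₃, l₄) = (x-y, y-z, x+y, y+z)` in `R` (cyclic indexing);
`L_i = R/(l_i, l_{i+1})`. -/
def lform : Fin 4 → Rring k := fun i =>
  Ideal.Quotient.mk (fourPtsIdeal k) (![X 0 - X 1, X 1 - X 2, X 0 + X 1, X 1 + X 2] i)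

/-- The ideal `I(p_i) = (l_i, l_{i+1})`, so that `L_i = R/I(p_i)`. -/
def ptIdeal (i : Fin 4) : Ideal (Rring k) := Ideal.span {lform k i, lform k (i + 1)}

/-- A tuple `c : k² ` determines the candidate graded degree-0 morphism
`N_t = coker Φ_t⁺ → R/J` sending the `i`-th degree-0 generator to `c i · 1`; it is a
morphism iff the relations (columns of `Φ_t⁺`) are killed, i.e. iff `c` lies in the
kernel of this map. -/
def homMap (t₀ t₁ : k) (J : Ideal (Rring k)) :
    (Fin 2 → k) →ₗ[k] (Fin 2 → (Rring k ⧸ J)) where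
  toFun c := fun j => ∑ i, c i • (Ideal.Quotient.mk J (PhiPlusR k t₀ t₁ i j))
  map_add' a b := by
    funext j
    simp [add_smul, Finset.sum_add_distrib]
  map_smul' m a := by
    funext j
    simp [Finset.smul_sum, mul_smul]

/-- `Hom_{gr R}(N_t, R/J)`, identified with the space of scalar tuples `c` as above. -/
def homSpace (t₀ t₁ : k) (J : Ideal (Rring k)) : Submodule k (Fin 2 → k) :=
  LinearMap.ker (homMap k t₀ t₁ J)

section

variable {k}

def phiPlus (t₀ t₁ : k) : Matrix (Fin 2) (Fin 2) (MvPolynomial (Fin 3) k) :=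
  !![C t₁ * (X 0 + X 1), X 1 + X 2;
     C t₀ * (X 2 - X 1), X 0 - X 1]

def lformPoly : Fin 4 → MvPolynomial (Fin 3) k :=
  ![X 0 - X 1, X 1 - X 2, X 0 + X 1, X 1 + X 2]

lemma PhiPlusR_eq_map (t₀ t₁ : k) :
    PhiPlusR k t₀ t₁ = (phiPlus t₀ t₁).map (Ideal.Quotient.mk (fourPtsIdeal k)) := rfl

lemma map_algebraMap_mul_map_mk {l m n p : Type*} [Fintype m] [Fintype p]
    (B : Matrix l m k) (P : Matrix m n (MvPolynomial (Fin 3) k))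
    (L : Matrix l p (MvPolynomial (Fin 3) k)) (A : Matrix p n k)
    (h : B.map (algebraMap k (MvPolynomial (Fin 3) k)) * P =
      L * A.map (algebraMap k (MvPolynomial (Fin 3) k))) :
    B.map (algebraMap k (MvPolynomial (Fin 3) k ⧸ fourPtsIdeal k)) *
        P.map (Ideal.Quotient.mk _) =
      L.map (Ideal.Quotient.mk _) *
        A.map (algebraMap k (MvPolynomial (Fin 3) k ⧸ fourPtsIdeal k)) := by
  have h' := congrArg (Matrix.map · (Ideal.Quotient.mk (fourPtsIdeal k))) h
  simp only [Matrix.map_mul, Matrix.map_map] at h'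
  exact h'

lemma mem_homSpace_iff (t₀ t₁ : k) (J : Ideal (Rring k)) (c : Fin 2 → k) :
    c ∈ homSpace k t₀ t₁ J ↔ ∀ j, ∑ i, c i • PhiPlusR k t₀ t₁ i j ∈ J := by
  rw [homSpace, LinearMap.mem_ker, funext_iff]
  refine forall_congr' fun j => ?_
  rw [← Ideal.Quotient.eq_zero_iff_mem, map_sum]
  simp only [← Ideal.Quotient.mkₐ_eq_mk k J, map_smul]
  rfl

lemma homSpace_eq_top_of_forall_mem (t₀ t₁ : k) (J : Ideal (Rring k))
    (h : ∀ i j, PhiPlusR k t₀ t₁ i j ∈ J) : homSpace k t₀ t₁ J = ⊤ :=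
  eq_top_iff.2 fun c _ => (mem_homSpace_iff t₀ t₁ J c).2 fun j =>
    sum_mem fun i _ => Submodule.smul_of_tower_mem J (c i) (h i j)

/-- A chain map `(A, B)` from `Φ_t⁺` to a presentation `L` of `R/J` induces the morphism
`N_t → R/J` with row `B = [c]`. -/
lemma mem_homSpace_of_mul_eq {n : Type*} [Fintype n] (t₀ t₁ : k) (J : Ideal (Rring k))
    (c : Fin 2 → k) (L : Matrix (Fin 1) n (Rring k)) (A : Matrix n (Fin 2) (Rring k))
    (hL : ∀ j, L 0 j ∈ J)
    (h : (Matrix.of ![c]).map (algebraMap k (Rring k)) * PhiPlusR k t₀ t₁ = L * A) :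
    c ∈ homSpace k t₀ t₁ J := by
  refine (mem_homSpace_iff t₀ t₁ J _).2 fun j => ?_
  have hj := congrFun (congrFun h 0) j
  simp only [Matrix.mul_apply, Matrix.map_apply, Matrix.of_apply, Matrix.cons_val_zero,
    ← Algebra.smul_def] at hj
  rw [hj]
  exact sum_mem fun l _ => J.mul_mem_right _ (hL l)

lemma mem_homSpace_ptIdeal_of_mul_eq (t₀ t₁ : k) (i : Fin 4) (c : Fin 2 → k)
    (A : Matrix (Fin 2) (Fin 2) k)
    (h : (Matrix.of ![c]).map (algebraMap k (MvPolynomial (Fin 3) k)) * phiPlus t₀ t₁ =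
      (!![lformPoly i, lformPoly (i + 1)] : Matrix (Fin 1) (Fin 2) (MvPolynomial (Fin 3) k)) *
        A.map (algebraMap k (MvPolynomial (Fin 3) k))) :
    c ∈ homSpace k t₀ t₁ (ptIdeal k i) := by
  refine mem_homSpace_of_mul_eq t₀ t₁ _ c _ _ (fun j => ?_)
    (map_algebraMap_mul_map_mk _ (phiPlus t₀ t₁) _ A h)
  fin_cases j
  exacts [Ideal.subset_span (Set.mem_insert _ _),
    Ideal.subset_span (Set.mem_insert_of_mem _ rfl)]

lemma PhiPlusR_mem_irrR (t₀ t₁ : k) (i j : Fin 2) : PhiPlusR k t₀ t₁ i j ∈ irrR k := by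
  have hX : ∀ n, Ideal.Quotient.mk (fourPtsIdeal k) (X n) ∈ irrR k := by
    intro n
    fin_cases n
    exacts [Ideal.subset_span (Set.mem_insert _ _),
      Ideal.subset_span (Set.mem_insert_of_mem _ (Set.mem_insert _ _)),
      Ideal.subset_span (Set.mem_insert_of_mem _ (Set.mem_insert_of_mem _ rfl))]
  rw [PhiPlusR_eq_map, Matrix.map_apply]
  fin_cases i <;> fin_cases j <;> simp [phiPlus] <;>
    apply_rules [Ideal.mul_mem_left, add_mem, sub_mem]

lemma finrank_homSpace_irrR (t₀ t₁ : k) : Module.finrank k (homSpace k t₀ t₁ (irrR k)) = 2 := by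
  rw [homSpace_eq_top_of_forall_mem t₀ t₁ _ (PhiPlusR_mem_irrR t₀ t₁), finrank_top,
    Module.finrank_fin_fun]

/-- `pointHom t₀ t₁ i` and `pointChainMap t₀ t₁ i` are the `B` and `A` of a chain map from `Φ_t⁺`
to the presentation `[l_i, l_{i+1}]` of the point module `ptIdeal i`. -/
def pointHom (t₀ t₁ : k) : Fin 4 → Fin 2 → k :=
  ![![0, 1], ![1, 1], ![1, 0], ![t₀, t₁]]

def pointChainMap (t₀ t₁ : k) : Fin 4 → Matrix (Fin 2) (Fin 2) k :=
  ![!![0, 1; -t₀, 0], !![-t₀, -1; t₁, 1], !![t₁, 0; 0, 1], !![t₀ * t₁, t₀; t₀ * t₁, t₁]]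

lemma pointHom_mul_phiPlus (t₀ t₁ : k) (i : Fin 4) :
    (Matrix.of ![pointHom t₀ t₁ i]).map (algebraMap k (MvPolynomial (Fin 3) k)) * phiPlus t₀ t₁ =
      (!![lformPoly i, lformPoly (i + 1)] : Matrix (Fin 1) (Fin 2) (MvPolynomial (Fin 3) k)) *
        (pointChainMap t₀ t₁ i).map (algebraMap k (MvPolynomial (Fin 3) k)) := by
  fin_cases i <;> ext a b : 1 <;> fin_cases a <;> fin_cases b <;>
    simp [pointHom, pointChainMap, phiPlus, lformPoly, Matrix.mul_apply] <;> ring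

lemma pointHom_ne_zero (t₀ t₁ : k) (ht₀ : t₀ ≠ 0) (i : Fin 4) : pointHom t₀ t₁ i ≠ 0 := by
  fin_cases i <;> simp [pointHom, funext_iff, ht₀]

lemma one_le_finrank_homSpace_ptIdeal (t₀ t₁ : k) (ht₀ : t₀ ≠ 0) (i : Fin 4) :
    1 ≤ Module.finrank k (homSpace k t₀ t₁ (ptIdeal k i)) := by
  rw [Submodule.one_le_finrank_iff, Submodule.ne_bot_iff]
  exact ⟨pointHom t₀ t₁ i,
    mem_homSpace_ptIdeal_of_mul_eq t₀ t₁ i _ _ (pointHom_mul_phiPlus t₀ t₁ i),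
    pointHom_ne_zero t₀ t₁ ht₀ i⟩

end

theorem stmt_15 (t₀ t₁ : k) (ht₀ : t₀ ≠ 0) :
    Module.finrank k (homSpace k t₀ t₁ (irrR k)) = 2 ∧
    (∀ i : Fin 4, 1 ≤ Module.finrank k (homSpace k t₀ t₁ (ptIdeal k i))) ∧
    (((!![(0 : k), 1]).map (algebraMap k (Rring k)) : Matrix (Fin 1) (Fin 2) (Rring k)) *
        PhiPlusR k t₀ t₁ =
      ((!![X 0 - X 1, X 1 - X 2]).map (Ideal.Quotient.mk (fourPtsIdeal k)) :
          Matrix (Fin 1) (Fin 2) (Rring k)) *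
        ((!![(0 : k), 1; -t₀, 0]).map (algebraMap k (Rring k)) :
          Matrix (Fin 2) (Fin 2) (Rring k))) ∧
    (![0, 1] ∈ homSpace k t₀ t₁ (ptIdeal k 0) ∧ (![0, 1] : Fin 2 → k) ≠ 0) := by
  refine ⟨finrank_homSpace_irrR t₀ t₁, one_le_finrank_homSpace_ptIdeal t₀ t₁ ht₀, ?_,
    mem_homSpace_ptIdeal_of_mul_eq t₀ t₁ 0 _ _ (pointHom_mul_phiPlus t₀ t₁ 0),
    pointHom_ne_zero t₀ t₁ ht₀ 0⟩
  exact map_algebraMap_mul_map_mk _ _ _ _ (pointHom_mul_phiPlus t₀ t₁ 0)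

end
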